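/- arXiv:2205.09901 — 4 statements merged into one kernel-verified Lean document; each statement's English description precedes it below -/
import Mathlib

section
/- Integrated gradients satisfies symmetry: let f : ℝⁿ → ℝ be continuously differentiable and symmetric in coordinates i and j (swapping the i-th and j-th arguments leaves f unchanged for every input). Then for all x, x' with x_i = x_j and x'_i = x'_j, the integrated-gradients contributions of coordinates i and j coincide: C_i^f(x,x') = C_j^f(x,x'). -/
/-!
The swap of coordinates `i` and `j` is a continuous linear equivalence that leaves `f` invariant
and fixes every point `x' + τ • (x - x')` of the path, so by the chain rule the derivative of `f`
at such a point takes the same value on `e_i` and on its image `e_j`.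
-/

open Function

variable {𝕜 E F : Type*} [NontriviallyNormedField 𝕜] [NormedAddCommGroup E] [NormedSpace 𝕜 E]
  [NormedAddCommGroup F] [NormedSpace 𝕜 F]

theorem Equiv.comp_swap_eq_self {α β : Type*} [DecidableEq α] {v : α → β} {i j : α}
    (hv : v i = v j) : v ∘ Equiv.swap i j = v := by
  rw [Equiv.comp_swap_eq_update, hv, update_eq_self, ← hv, update_eq_self]

theorem Pi.single_comp_swap {α β : Type*} [DecidableEq α] [Zero β] (i j : α) (b : β) :
    Pi.single i b ∘ Equiv.swap i j = Pi.single j b := by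
  ext k
  simp [Pi.single_apply, Equiv.swap_apply_eq_iff]

theorem fderiv_apply_map_eq_of_comp_eq (L : E ≃L[𝕜] E) {f : E → F} (hf : f ∘ L = f) {v : E}
    (hv : L v = v) (u : E) : fderiv 𝕜 f v (L u) = fderiv 𝕜 f v u := by
  have h := L.comp_right_fderiv (f := f) (x := v)
  rw [hf, hv] at h
  exact (DFunLike.congr_fun h u).symm

theorem fderiv_apply_comp_perm_eq [CompleteSpace 𝕜] {ι : Type*} [Fintype ι] (σ : Equiv.Perm ι)
    {f : (ι → 𝕜) → F} (hf : ∀ v, f (v ∘ σ) = f v) {v : ι → 𝕜} (hv : v ∘ σ = v) (u : ι → 𝕜) :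
    fderiv 𝕜 f v (u ∘ σ) = fderiv 𝕜 f v u :=
  fderiv_apply_map_eq_of_comp_eq (LinearEquiv.funCongrLeft 𝕜 𝕜 σ).toContinuousLinearEquiv
    (funext hf) hv u

theorem integrated_gradients_symmetry_general {n : ℕ}
    (f : (Fin n → ℝ) → ℝ) (i j : Fin n)
    (hsym : ∀ v : Fin n → ℝ, f (v ∘ Equiv.swap i j) = f v)
    (x x' : Fin n → ℝ) (hx : x i = x j) (hx' : x' i = x' j) :
    (x i - x' i) *
        ∫ τ in (0:ℝ)..1, fderiv ℝ f (x' + τ • (x - x')) (Pi.single i 1)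
      = (x j - x' j) *
        ∫ τ in (0:ℝ)..1, fderiv ℝ f (x' + τ • (x - x')) (Pi.single j 1) := by
  have hpath (τ : ℝ) : (x' + τ • (x - x')) ∘ Equiv.swap i j = x' + τ • (x - x') :=
    Equiv.comp_swap_eq_self (by simp [hx, hx'])
  rw [hx, hx']
  congr 1
  refine intervalIntegral.integral_congr fun τ _ => ?_
  rw [← Pi.single_comp_swap i j]
  exact (fderiv_apply_comp_perm_eq _ hsym (hpath τ) _).symm

/-- symmetry axiom of integrated gradients. If `f` is symmetric in
coordinates `i` and `j`, and `x i = x j`, `x' i = x' j`, then the contributions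
of coordinates `i` and `j` coincide. -/
theorem integrated_gradients_symmetry {n : ℕ}
    (f : (Fin n → ℝ) → ℝ) (hf : ContDiff ℝ 1 f) (i j : Fin n)
    (hsym : ∀ v : Fin n → ℝ, f (v ∘ Equiv.swap i j) = f v)
    (x x' : Fin n → ℝ) (hx : x i = x j) (hx' : x' i = x' j) :
    (x i - x' i) *
        ∫ τ in (0:ℝ)..1, fderiv ℝ f (x' + τ • (x - x')) (Pi.single i 1)
      = (x j - x' j) *
        ∫ τ in (0:ℝ)..1, fderiv ℝ f (x' + τ • (x - x')) (Pi.single j 1) :=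
  integrated_gradients_symmetry_general f i j hsym x x' hx hx'
end

section
/- Under the hypotheses of the gradient-factorization identity (∂f/∂x_i (x) = B_i Σ_m A_m g_m(x) with A_m ≥ 0 and g_m ≥ 0 everywhere), for all x, x' and indices i, j: if B_i(x'_i − x_i) ≤ B_j(x'_j − x_j) then f(x^{{i}|x'}) ≤ f(x^{{j}|x'}). -/
/-!
Write `a = x^{{i}|x'}`, `b = x^{{j}|x'}` and `d_k = x'_k - x_k`. Then `b - a = d_j e_j - d_i e_i`,
so by the factorization of the gradient the derivative of `f` at any point `z` in the direction
`b - a` is `(B_j d_j - B_i d_i) · Σ_m A_m g_m(z) ≥ 0`, and the mean value theorem on the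
segment `[a, b]` gives `f a ≤ f b`.
-/

open Function

theorem Function.update_sub_self {ι G : Type*} [DecidableEq ι] [AddGroup G]
    (x : ι → G) (i : ι) (a : G) : update x i a - x = Pi.single i (a - x i) := by
  ext k
  rcases eq_or_ne k i with rfl | hk <;> simp [*]

theorem le_of_fderiv_apply_sub_nonneg {E : Type*} [NormedAddCommGroup E] [NormedSpace ℝ E]
    {f : E → ℝ} (hf : Differentiable ℝ f) {a b : E} (h : ∀ z, 0 ≤ fderiv ℝ f z (b - a)) :
    f a ≤ f b := by
  obtain ⟨z, -, hz⟩ := domain_mvt (fun y _ => (hf y).hasFDerivAt.hasFDerivWithinAt)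
    convex_univ (Set.mem_univ a) (Set.mem_univ b)
  linarith [h z]

/-- under the gradient-factorization hypothesis, the ordering of
the quantities `B_k (x'_k − x_k)` determines the ordering of the effects of
single-coordinate substitutions on `f`. -/
theorem gradient_factorization_substitution_order {n M : ℕ}
    (f : (Fin n → ℝ) → ℝ) (hf : ContDiff ℝ 1 f)
    (A : Fin M → ℝ) (hA : ∀ m, 0 ≤ A m)
    (B : Fin n → ℝ)
    (g : Fin M → (Fin n → ℝ) → ℝ) (hg : ∀ m v, 0 ≤ g m v)
    (hgrad : ∀ (i : Fin n) (x : Fin n → ℝ),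
      fderiv ℝ f x (Pi.single i 1) = B i * ∑ m, A m * g m x)
    (x x' : Fin n → ℝ) (i j : Fin n)
    (hle : B i * (x' i - x i) ≤ B j * (x' j - x j)) :
    f (Function.update x i (x' i)) ≤ f (Function.update x j (x' j)) := by
  refine le_of_fderiv_apply_sub_nonneg (hf.differentiable one_ne_zero) fun z => ?_
  have hG : 0 ≤ ∑ m, A m * g m z := Finset.sum_nonneg fun m _ => mul_nonneg (hA m) (hg m z)
  have hsingle : ∀ k (d : ℝ), fderiv ℝ f z (Pi.single k d) = d * (B k * ∑ m, A m * g m z) := by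
    intro k d
    rw [← hgrad, ← smul_eq_mul, ← map_smul, ← Pi.single_smul', smul_eq_mul, mul_one]
  rw [← sub_sub_sub_cancel_right _ _ x, update_sub_self, update_sub_self, map_sub,
    hsingle, hsingle]
  linarith [mul_le_mul_of_nonneg_right hle hG]
end

section
/- Let Δ ⊆ ℝⁿ be bounded by l, u ∈ Δ (l ≤ x ≤ u componentwise for all x ∈ Δ), and let N : Δ → {0,1} be monotone (x ≤ x' componentwise implies N(x) ≤ N(x')). Let e ∈ Δ with N(e) = 1 and S ⊆ {1,…,n}. Then S is an abductive explanation for e (i.e., N(e^{S̄|z}) = N(e) for all z ∈ Δ, where S̄ is the complement of S and e^{S̄|z} replaces the coordinates outside S by those of z) if and only if N(e^{S̄|l}) = 1. -/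
/-- `substOn x S y` is `x^{S|y}`: the vector `x` with the coordinates in `S`
replaced by those of `y`. -/
def substOn {n : ℕ} (x : Fin n → ℝ) (S : Finset (Fin n)) (y : Fin n → ℝ) :
    Fin n → ℝ :=
  fun i => if i ∈ S then y i else x i

theorem substOn_le_substOn {n : ℕ} (x : Fin n → ℝ) (S : Finset (Fin n)) {y z : Fin n → ℝ}
    (h : ∀ i ∈ S, y i ≤ z i) (i : Fin n) : substOn x S y i ≤ substOn x S z i := by
  unfold substOn
  split_ifs with hi
  · exact h i hi
  · exact le_rfl

theorem abductive_iff_lower_bound_general {n : ℕ}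
    (Δ : Set (Fin n → ℝ)) (l u : Fin n → ℝ) (hl : l ∈ Δ)
    (hbound : ∀ x ∈ Δ, ∀ i, l i ≤ x i ∧ x i ≤ u i)
    (hclosed : ∀ x ∈ Δ, ∀ y ∈ Δ, ∀ S : Finset (Fin n), substOn x S y ∈ Δ)
    (N : (Fin n → ℝ) → ℕ)
    (hN01 : ∀ x ∈ Δ, N x = 0 ∨ N x = 1)
    (hNmono : ∀ x ∈ Δ, ∀ x' ∈ Δ, (∀ i, x i ≤ x' i) → N x ≤ N x')
    (e : Fin n → ℝ) (he : e ∈ Δ) (hNe : N e = 1) (S : Finset (Fin n)) :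
    (∀ z ∈ Δ, N (substOn e Sᶜ z) = N e) ↔ N (substOn e Sᶜ l) = 1 := by
  refine ⟨fun h => hNe ▸ h l hl, fun hlow z hz => ?_⟩
  have hz_mem : substOn e Sᶜ z ∈ Δ := hclosed e he z hz Sᶜ
  have hlow_le : N (substOn e Sᶜ l) ≤ N (substOn e Sᶜ z) :=
    hNmono _ (hclosed e he l hl Sᶜ) _ hz_mem
      (substOn_le_substOn e Sᶜ fun i _ => (hbound z hz i).1)
  rcases hN01 _ hz_mem with h0 | h1 <;> omega

/-- for a monotone classifier on a bounded domain closed under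
substitution, with `N e = 1`, a subset `S` is an abductive explanation for `e`
iff substituting the lower bound on the complement of `S` still yields `1`. -/
theorem abductive_iff_lower_bound {n : ℕ}
    (Δ : Set (Fin n → ℝ)) (l u : Fin n → ℝ) (hl : l ∈ Δ) (hu : u ∈ Δ)
    (hbound : ∀ x ∈ Δ, ∀ i, l i ≤ x i ∧ x i ≤ u i)
    (hclosed : ∀ x ∈ Δ, ∀ y ∈ Δ, ∀ S : Finset (Fin n), substOn x S y ∈ Δ)
    (N : (Fin n → ℝ) → ℕ)
    (hN01 : ∀ x ∈ Δ, N x = 0 ∨ N x = 1)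
    (hNmono : ∀ x ∈ Δ, ∀ x' ∈ Δ, (∀ i, x i ≤ x' i) → N x ≤ N x')
    (e : Fin n → ℝ) (he : e ∈ Δ) (hNe : N e = 1) (S : Finset (Fin n)) :
    (∀ z ∈ Δ, N (substOn e Sᶜ z) = N e) ↔ N (substOn e Sᶜ l) = 1 :=
  abductive_iff_lower_bound_general Δ l u hl hbound hclosed N hN01 hNmono e he hNe S
end

section
/- Let E₁,…,E_m be subsets of {1,…,n} with ⋃ᵢ Eᵢ = {1,…,n}. Define N : {0,1}^m → {0,1} by N(y) = 1 iff for every j ∈ {1,…,n} there exists i with j ∈ Eᵢ and yᵢ = 1. Then for the all-zeros input x = 0 and any S ⊆ {1,…,m}: there exists y ∈ {0,1}^m with N(x^{S|y}) ≠ N(x) if and only if ⋃_{i∈S} Eᵢ = {1,…,n}. -/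
open Classical in
/-- The function computed by the 2-layer step-function network in the
SET-COVER reduction: `setCoverNet E y = 1` iff every `j` lies in some `Eᵢ`
with `yᵢ = true`. -/
noncomputable def setCoverNet {m n : ℕ} (E : Fin m → Finset (Fin n))
    (y : Fin m → Bool) : ℕ :=
  if ∀ j : Fin n, ∃ i : Fin m, j ∈ E i ∧ y i = true then 1 else 0

/-!
With `n ≥ 1` the all-zeros input covers nothing, so `N(0) = 0` and a substitution on `S` changes
the prediction iff it makes the network fire. Whatever values it puts on `S`, the active sets all
belong to `S`, and setting every coordinate of `S` to `1` activates all of them: so some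
substitution fires iff the sets indexed by `S` cover `{1, …, n}`.
-/

section SetCoverNet

variable {m n : ℕ} (E : Fin m → Finset (Fin n))

theorem setCoverNet_ne_zero_iff (y : Fin m → Bool) :
    setCoverNet E y ≠ 0 ↔ ∀ j : Fin n, ∃ i : Fin m, j ∈ E i ∧ y i = true := by
  unfold setCoverNet
  split_ifs with h <;> simp [h]

theorem setCoverNet_const_false (hn : 0 < n) : setCoverNet E (fun _ => false) = 0 := by
  by_contra h
  obtain ⟨_, _, hfalse⟩ := (setCoverNet_ne_zero_iff E _).mp h ⟨0, hn⟩
  exact Bool.false_ne_true hfalse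

theorem exists_restrict_covers_iff (S : Finset (Fin m)) :
    (∃ y : Fin m → Bool, ∀ j : Fin n, ∃ i : Fin m,
        j ∈ E i ∧ (if i ∈ S then y i else false) = true)
      ↔ ∀ j : Fin n, ∃ i ∈ S, j ∈ E i := by
  simp only [Bool.if_false_right, Bool.and_eq_true, decide_eq_true_eq]
  constructor
  · rintro ⟨y, hy⟩ j
    obtain ⟨i, hij, hiS, -⟩ := hy j
    exact ⟨i, hiS, hij⟩
  · intro hS
    refine ⟨fun _ => true, fun j => ?_⟩
    obtain ⟨i, hiS, hij⟩ := hS j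
    exact ⟨i, hij, hiS, rfl⟩

end SetCoverNet

theorem set_cover_reduction_mcr_general {m n : ℕ} (hn : 0 < n)
    (E : Fin m → Finset (Fin n))
    (S : Finset (Fin m)) :
    (∃ y : Fin m → Bool,
        setCoverNet E (fun i => if i ∈ S then y i else false)
          ≠ setCoverNet E (fun _ => false))
      ↔ ∀ j : Fin n, ∃ i ∈ S, j ∈ E i := by
  simp only [setCoverNet_const_false E hn, setCoverNet_ne_zero_iff]
  exact exists_restrict_covers_iff E S

/-- correctness of the SET-COVER reduction for MCR. For the
all-zeros input, a subset `S` of the input coordinates admits a substitution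
changing the prediction iff `{Eᵢ : i ∈ S}` is a set cover. -/
theorem set_cover_reduction_mcr {m n : ℕ} (hn : 0 < n)
    (E : Fin m → Finset (Fin n))
    (hcover : ∀ j : Fin n, ∃ i : Fin m, j ∈ E i)
    (S : Finset (Fin m)) :
    (∃ y : Fin m → Bool,
        setCoverNet E (fun i => if i ∈ S then y i else false)
          ≠ setCoverNet E (fun _ => false))
      ↔ ∀ j : Fin n, ∃ i ∈ S, j ∈ E i :=
  set_cover_reduction_mcr_general hn E S
end
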